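/- arXiv:2302.01523 — 2 statements merged into one kernel-verified Lean document; each statement's English description precedes it below -/
import Mathlib

section
/- Consider an advertiser with global target ROI γ = 1 and unlimited budget procuring from 2 channels, where channel 1 has a single auction with value 1 and cost 0, and channel 2 has two auctions with values X and 2X and costs 1+X and 2(1+X) respectively, for a parameter X > 0. The global optimum (maximizing total value of fractionally procured auctions subject to total value ≥ total cost) equals 1 + X, while the maximum total value achievable by setting only per-channel target ROIs (where each channel greedily maximizes value subject to channel value ≥ per-channel ROI times channel cost) equals 1. Hence the ratio of channel-optimal to global-optimal value is 1/(1+X), which tends to 0 as X → ∞. -/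
open Filter

/-- Global optimum for the two-channel instance: fractional procurement of the three
auctions maximizing total value subject to total value ≥ total cost (γ = 1, ρ = ∞). -/
noncomputable def glopt (X : ℝ) : ℝ :=
  sSup {v : ℝ | ∃ x₁ x₂ x₃ : ℝ,
    x₁ ∈ Set.Icc (0:ℝ) 1 ∧ x₂ ∈ Set.Icc (0:ℝ) 1 ∧ x₃ ∈ Set.Icc (0:ℝ) 1 ∧
    v = x₁ * 1 + x₂ * X + x₃ * (2 * X) ∧
    x₁ * 1 + x₂ * X + x₃ * (2 * X) ≥ x₁ * 0 + x₂ * (1 + X) + x₃ * (2 * (1 + X))}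

/-- Feasibility of channel 2's procurement under per-channel target ROI γ₂. -/
def chan2Feas (X γ₂ x₂ x₃ : ℝ) : Prop :=
  x₂ ∈ Set.Icc (0:ℝ) 1 ∧ x₃ ∈ Set.Icc (0:ℝ) 1 ∧
  x₂ * X + x₃ * (2 * X) ≥ γ₂ * (x₂ * (1 + X) + x₃ * (2 * (1 + X)))

/-- Best total conversion achievable via per-channel target ROIs only: channel 1 always
wins its (zero-cost) auction, channel 2 greedily maximizes value subject to its own ROI
constraint, and the aggregate ROI constraint (total value ≥ total cost) must hold. -/
noncomputable def chopt (X : ℝ) : ℝ :=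
  sSup {v : ℝ | ∃ γ₂ x₂ x₃ : ℝ, 0 ≤ γ₂ ∧ chan2Feas X γ₂ x₂ x₃ ∧
    (∀ y₂ y₃ : ℝ, chan2Feas X γ₂ y₂ y₃ →
      y₂ * X + y₃ * (2 * X) ≤ x₂ * X + x₃ * (2 * X)) ∧
    v = 1 + (x₂ * X + x₃ * (2 * X)) ∧
    v ≥ x₂ * (1 + X) + x₃ * (2 * (1 + X))}

/-!
Both auctions of channel 2 have the same value-to-cost ratio `X / (1 + X)`. Globally, the ROI
constraint reads `x₂ + 2 x₃ ≤ x₁`: the free auction of channel 1 subsidises one unit of channel 2,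
worth `X`. A per-channel target `γ₂`, however, either admits both auctions of channel 2 or
neither, so channel 2's greedy best response is all-or-nothing; buying everything costs
`3 (1 + X)` against a total value of `1 + 3 X`, which violates the aggregate constraint, so only
the value `1` of channel 1 remains.
-/

lemma global_value_le {X x₁ x₂ x₃ : ℝ} (hX : 0 ≤ X) (hx₁ : x₁ ≤ 1)
    (hroi : x₁ * 1 + x₂ * X + x₃ * (2 * X) ≥ x₁ * 0 + x₂ * (1 + X) + x₃ * (2 * (1 + X))) :
    x₁ * 1 + x₂ * X + x₃ * (2 * X) ≤ 1 + X := by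
  have hspend : x₂ + 2 * x₃ ≤ x₁ := by linarith
  nlinarith

lemma glopt_eq {X : ℝ} (hX : 0 ≤ X) : glopt X = 1 + X := by
  refine IsGreatest.csSup_eq
    ⟨⟨1, 1, 0, by norm_num, by norm_num, by norm_num, by ring, by linarith⟩, ?_⟩
  rintro v ⟨x₁, x₂, x₃, ⟨-, hx₁⟩, -, -, rfl, hroi⟩
  exact global_value_le hX hx₁ hroi

lemma chan2Feas_one_one {X γ₂ : ℝ} (h : γ₂ * (1 + X) ≤ X) : chan2Feas X γ₂ 1 1 :=
  ⟨by norm_num, by norm_num, by linarith⟩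

lemma chan2Feas.quantity_eq_zero {X γ₂ x₂ x₃ : ℝ} (h : X < γ₂ * (1 + X))
    (hf : chan2Feas X γ₂ x₂ x₃) : x₂ + 2 * x₃ = 0 := by
  obtain ⟨⟨hx₂, -⟩, ⟨hx₃, -⟩, hroi⟩ := hf
  have hroi' : (x₂ + 2 * x₃) * (γ₂ * (1 + X) - X) ≤ 0 := by linarith
  have : x₂ + 2 * x₃ ≤ 0 := nonpos_of_mul_nonpos_left hroi' (by linarith)
  linarith

lemma chan2_best_response_all_or_nothing {X γ₂ x₂ x₃ : ℝ} (hX : 0 < X)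
    (hf : chan2Feas X γ₂ x₂ x₃)
    (hmax : ∀ y₂ y₃ : ℝ, chan2Feas X γ₂ y₂ y₃ →
      y₂ * X + y₃ * (2 * X) ≤ x₂ * X + x₃ * (2 * X)) :
    x₂ + 2 * x₃ = 0 ∨ x₂ + 2 * x₃ = 3 := by
  rcases le_or_gt (γ₂ * (1 + X)) X with hadmit | hexclude
  · obtain ⟨⟨-, hx₂⟩, ⟨-, hx₃⟩, -⟩ := hf
    have hvalue : 3 * X ≤ (x₂ + 2 * x₃) * X := by linarith [hmax 1 1 (chan2Feas_one_one hadmit)]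
    have : 3 ≤ x₂ + 2 * x₃ := le_of_mul_le_mul_right hvalue hX
    exact Or.inr (by linarith)
  · exact Or.inl (hf.quantity_eq_zero hexclude)

lemma chopt_eq {X : ℝ} (hX : 0 < X) : chopt X = 1 := by
  have hexclude : X < 1 * (1 + X) := by linarith
  refine IsGreatest.csSup_eq ⟨⟨1, 0, 0, zero_le_one, ⟨by norm_num, by norm_num, by norm_num⟩,
    fun y₂ y₃ hy => ?_, by ring, by norm_num⟩, ?_⟩
  · linear_combination X * hy.quantity_eq_zero hexclude
  rintro v ⟨γ₂, x₂, x₃, -, hf, hmax, rfl, hagg⟩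
  have hbudget : x₂ + 2 * x₃ ≤ 1 := by linarith
  rcases chan2_best_response_all_or_nothing hX hf hmax with hnone | hall
  · linear_combination X * hnone
  · linarith

theorem roi_only_fails :
    (∀ X : ℝ, 0 < X →
      glopt X = 1 + X ∧ chopt X = 1 ∧ chopt X / glopt X = 1 / (1 + X)) ∧
    Tendsto (fun X : ℝ => chopt X / glopt X) atTop (nhds 0) := by
  have hratio : ∀ X : ℝ, 0 < X → chopt X / glopt X = 1 / (1 + X) := fun X hX => by
    rw [glopt_eq hX.le, chopt_eq hX]
  refine ⟨fun X hX => ⟨glopt_eq hX.le, chopt_eq hX, hratio X hX⟩, ?_⟩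
  have hlim : Tendsto (fun X : ℝ => 1 / (1 + X)) atTop (nhds 0) :=
    tendsto_const_nhds.div_atTop (tendsto_atTop_add_const_left atTop 1 tendsto_id)
  exact hlim.congr' ((eventually_gt_atTop 0).mono fun X hX => (hratio X hX).symm)
end

section
/- (Increasing marginal values imply decreasing value-to-cost ratios) Let v(1) > v(2) > … > v(L) > 0 and d(1) > d(2) > … > d(L) > 0. Suppose (v(ℓ−1) − v(ℓ))/(d(ℓ−1) − d(ℓ)) is strictly decreasing in ℓ for ℓ = 2,…,L, and (v(L−1) − v(L))/(d(L−1) − d(L)) > v(L)/d(L). Then v(1)/d(1) > v(2)/d(2) > … > v(L)/d(L). -/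
/-- Mediant lemma: if the marginal ratio exceeds b/e, then b/e < a/c < marginal. -/
lemma imv_aux (a b c e : ℝ) (hb : 0 < b) (he : 0 < e) (hce : e < c)
    (h : b / e < (a - b) / (c - e)) : b / e < a / c ∧ a / c < (a - b) / (c - e) := by
  have hce' : 0 < c - e := by linarith
  have hc : 0 < c := by linarith
  have hab : 0 < a - b := by
    by_contra hn
    push_neg at hn
    have : (a - b) / (c - e) ≤ 0 := div_nonpos_of_nonpos_of_nonneg hn hce'.le
    have : 0 < b / e := div_pos hb he
    linarith
  constructor
  · rw [div_lt_div_iff₀ he hc]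
    rw [div_lt_div_iff₀ he hce'] at h
    nlinarith
  · rw [div_lt_div_iff₀ hc hce']
    rw [div_lt_div_iff₀ he hce'] at h
    nlinarith

/-- Increasing marginal values imply strictly decreasing value-to-cost ratios. -/
theorem increasing_marginal_values_imply_decreasing_ratios
    (L : ℕ) (hL : 2 ≤ L) (v d : ℕ → ℝ)
    (hvlast : 0 < v L) (hdlast : 0 < d L)
    (hvdec : ∀ ℓ, 1 ≤ ℓ → ℓ < L → v (ℓ + 1) < v ℓ)
    (hddec : ∀ ℓ, 1 ≤ ℓ → ℓ < L → d (ℓ + 1) < d ℓ)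
    (hmarg : ∀ ℓ, 2 ≤ ℓ → ℓ < L →
      (v ℓ - v (ℓ + 1)) / (d ℓ - d (ℓ + 1)) < (v (ℓ - 1) - v ℓ) / (d (ℓ - 1) - d ℓ))
    (hlast : (v (L - 1) - v L) / (d (L - 1) - d L) > v L / d L) :
    ∀ ℓ, 1 ≤ ℓ → ℓ < L → v (ℓ + 1) / d (ℓ + 1) < v ℓ / d ℓ := by
  -- positivity of d and v on [1, L]
  have hdpos : ∀ k ℓ, ℓ + k = L → 1 ≤ ℓ → 0 < d ℓ := by
    intro k
    induction k with
    | zero => intro ℓ h _; obtain rfl : ℓ = L := by omega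
              exact hdlast
    | succ k ih =>
      intro ℓ h h1
      have hlt : ℓ < L := by omega
      have := ih (ℓ + 1) (by omega) (by omega)
      have := hddec ℓ h1 hlt
      linarith
  have hvpos : ∀ k ℓ, ℓ + k = L → 1 ≤ ℓ → 0 < v ℓ := by
    intro k
    induction k with
    | zero => intro ℓ h _; obtain rfl : ℓ = L := by omega
              exact hvlast
    | succ k ih =>
      intro ℓ h h1
      have hlt : ℓ < L := by omega
      have := ih (ℓ + 1) (by omega) (by omega)
      have := hvdec ℓ h1 hlt
      linarith
  -- key: marginal at ℓ exceeds v(ℓ+1)/d(ℓ+1)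
  have key : ∀ k ℓ, 1 ≤ ℓ → ℓ < L → L - 1 - ℓ = k →
      v (ℓ + 1) / d (ℓ + 1) < (v ℓ - v (ℓ + 1)) / (d ℓ - d (ℓ + 1)) := by
    intro k
    induction k with
    | zero =>
      intro ℓ h1 hlt hk
      have hℓ : ℓ = L - 1 := by omega
      have hℓ1 : ℓ + 1 = L := by omega
      rw [hℓ, show L - 1 + 1 = L by omega]
      exact hlast
    | succ k ih =>
      intro ℓ h1 hlt hk
      have hlt1 : ℓ + 1 < L := by omega
      have ihh := ih (ℓ + 1) (by omega) hlt1 (by omega)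
      have hm := hmarg (ℓ + 1) (by omega) hlt1
      simp only [Nat.add_sub_cancel] at hm
      have hvp : 0 < v (ℓ + 1 + 1) := hvpos (L - (ℓ + 2)) (ℓ + 2) (by omega) (by omega)
      have hdp : 0 < d (ℓ + 1 + 1) := hdpos (L - (ℓ + 2)) (ℓ + 2) (by omega) (by omega)
      have hde : d (ℓ + 1 + 1) < d (ℓ + 1) := hddec (ℓ + 1) (by omega) hlt1
      have := (imv_aux (v (ℓ + 1)) (v (ℓ + 1 + 1)) (d (ℓ + 1)) (d (ℓ + 1 + 1))
        hvp hdp hde ihh).2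
      linarith
  intro ℓ h1 hlt
  have hkey := key (L - 1 - ℓ) ℓ h1 hlt rfl
  have hvp : 0 < v (ℓ + 1) := hvpos (L - (ℓ + 1)) (ℓ + 1) (by omega) (by omega)
  have hdp : 0 < d (ℓ + 1) := hdpos (L - (ℓ + 1)) (ℓ + 1) (by omega) (by omega)
  have hde : d (ℓ + 1) < d ℓ := hddec ℓ h1 hlt
  exact (imv_aux (v ℓ) (v (ℓ + 1)) (d ℓ) (d (ℓ + 1)) hvp hdp hde hkey).1
end
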